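/- arXiv:math/0508288 — 4 statements merged into one kernel-verified Lean document; each statement's English description precedes it below -/
import Mathlib

section
/- Let f(z) = λz + Σ_{j≥2} a_j z^j be analytic on Δ_{r_0} with 0 < |λ| < 1 or |λ| > 1 (König's Theorem, existence). Then there exist δ with 0 < δ < r_0 and an injective holomorphic map φ : Δ_δ → ℂ with φ(0) = 0 and φ'(0) ≠ 0 such that f(φ(z)) = φ(λz) for all z ∈ Δ_δ. -/
/-!
For `0 < ‖λ‖ < 1` pick `‖λ‖ < k < √‖λ‖`. Near `0` the map `f` contracts by the factor `k` and
`f w = λ w + O(w²)`, so consecutive normalized iterates `fⁿ z / λⁿ` differ by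
`(f w - λ w) / λⁿ⁺¹ = O((k² / ‖λ‖)ⁿ)` with `w = fⁿ z`. Hence they converge uniformly near `0` to a
holomorphic Koenigs function `ψ` with `ψ 0 = 0`, `ψ' 0 = 1` and `ψ ∘ f = λ ψ`, and the local
inverse `φ` of `ψ` satisfies `f ∘ φ = φ (λ ·)`. For `‖λ‖ > 1` the same construction applied to the
local inverse of `f`, whose multiplier is `λ⁻¹`, gives `ψ ∘ f = λ ψ` again.
-/

open Metric Complex

open Filter Set
open scoped Topology

theorem exists_tendstoUniformlyOn_of_norm_sub_succ_le {α E : Type*} [NormedAddCommGroup E]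
    [CompleteSpace E] {F : ℕ → α → E} {s : Set α} {u : ℕ → ℝ} (hu : Summable u)
    (hF : ∀ n, ∀ x ∈ s, ‖F (n + 1) x - F n x‖ ≤ u n) :
    ∃ G, TendstoUniformlyOn F G atTop s := by
  have hsum := tendstoUniformlyOn_tsum_nat hu hF
  refine ⟨fun x => F 0 x + ∑' n, (F (n + 1) x - F n x), ?_⟩
  rw [Metric.tendstoUniformlyOn_iff] at hsum ⊢
  intro ε hε
  filter_upwards [hsum ε hε] with N hN x hx
  rw [← sub_add_cancel (F N x) (F 0 x), ← Finset.sum_range_sub (fun n => F n x),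
    add_comm (F 0 x), dist_add_right]
  exact hN x hx

theorem HasDerivAt.eventually_norm_le {𝕜 E : Type*} [NontriviallyNormedField 𝕜]
    [NormedAddCommGroup E] [NormedSpace 𝕜 E] {f : 𝕜 → E} {f' : E} {k : ℝ}
    (hf : HasDerivAt f f' 0) (hf0 : f 0 = 0) (hk : ‖f'‖ < k) :
    ∀ᶠ z in 𝓝 0, ‖f z‖ ≤ k * ‖z‖ := by
  have hlin := (hasDerivAt_iff_isLittleO.1 hf).def (sub_pos.2 hk)
  filter_upwards [hlin] with z hz
  simp only [hf0, sub_zero] at hz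
  calc ‖f z‖ ≤ ‖z • f'‖ + ‖f z - z • f'‖ := norm_le_insert' _ _
    _ ≤ ‖z‖ * ‖f'‖ + (k - ‖f'‖) * ‖z‖ := by rw [norm_smul]; gcongr
    _ = k * ‖z‖ := by ring

theorem AnalyticAt.isBigO_sub_deriv_mul_sq {𝕜 : Type*} [NontriviallyNormedField 𝕜] {f : 𝕜 → 𝕜}
    (hf : AnalyticAt 𝕜 f 0) (hf0 : f 0 = 0) :
    (fun z => f z - deriv f 0 * z) =O[𝓝 0] fun z => z ^ 2 := by
  set h := dslope (dslope f 0) 0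
  have hh : ContinuousAt h 0 := by
    obtain ⟨p, hp⟩ := hf
    exact hp.has_fpower_series_dslope_fslope.has_fpower_series_dslope_fslope.continuousAt
  have hfh : ∀ z, f z - deriv f 0 * z = z ^ 2 * h z := by
    intro z
    have h1 := sub_smul_dslope f 0 z
    have h2 := sub_smul_dslope (dslope f 0) 0 z
    rw [dslope_same] at h2
    simp only [sub_zero, smul_eq_mul, hf0] at h1 h2
    linear_combination -h1 - z * h2
  simp only [hfh]
  simpa using (Asymptotics.isBigO_refl (fun z : 𝕜 => z ^ 2) (𝓝 0)).mul (hh.tendsto.isBigO_one 𝕜)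

theorem norm_iterate_le_pow_mul {E : Type*} [SeminormedAddCommGroup E] {f : E → E} {k r : ℝ}
    (hk0 : 0 ≤ k) (hk1 : k ≤ 1) (hf : ∀ z ∈ closedBall (0 : E) r, ‖f z‖ ≤ k * ‖z‖) (n : ℕ)
    {z : E} (hz : z ∈ closedBall 0 r) : ‖f^[n] z‖ ≤ k ^ n * ‖z‖ := by
  induction n with
  | zero => simp
  | succ n ih =>
    have hmem : f^[n] z ∈ closedBall 0 r := by
      rw [mem_closedBall_zero_iff] at hz ⊢
      exact ih.trans ((mul_le_of_le_one_left (norm_nonneg z) (pow_le_one₀ hk0 hk1)).trans hz)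
    rw [Function.iterate_succ_apply', pow_succ', mul_assoc]
    exact (hf _ hmem).trans (mul_le_mul_of_nonneg_left ih hk0)

theorem AnalyticAt.exists_localInverse {𝕜 : Type*} [NontriviallyNormedField 𝕜] [CompleteSpace 𝕜]
    [CharZero 𝕜] {F : 𝕜 → 𝕜} {a : 𝕜} (hF : AnalyticAt 𝕜 F a) (hF' : deriv F a ≠ 0) :
    ∃ G : 𝕜 → 𝕜, AnalyticAt 𝕜 G (F a) ∧ G (F a) = a ∧ deriv G (F a) = (deriv F a)⁻¹ ∧
      (∀ᶠ w in 𝓝 (F a), F (G w) = w) ∧ ∀ᶠ z in 𝓝 a, G (F z) = z :=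
  ⟨_, hF.analyticAt_localInverse hF', HasStrictFDerivAt.localInverse_apply_image ..,
    (HasStrictDerivAt.to_localInverse ..).hasDerivAt.deriv,
    HasStrictDerivAt.eventually_right_inverse .., HasStrictDerivAt.eventually_left_inverse ..⟩

theorem eventually_semiconj_of_leftInverse {X Y : Type*} [TopologicalSpace X]
    [TopologicalSpace Y] {f : X → X} {g : Y → Y} {ψ : X → Y} {φ : Y → X} {x₀ : X} {y₀ : Y}
    (hf : ContinuousAt f x₀) (hfx₀ : f x₀ = x₀) (hφ : ContinuousAt φ y₀) (hφy₀ : φ y₀ = x₀)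
    (hψf : ∀ᶠ x in 𝓝 x₀, ψ (f x) = g (ψ x)) (hφψ : ∀ᶠ x in 𝓝 x₀, φ (ψ x) = x)
    (hψφ : ∀ᶠ y in 𝓝 y₀, ψ (φ y) = y) :
    ∀ᶠ y in 𝓝 y₀, f (φ y) = φ (g y) := by
  have hφt : Tendsto φ (𝓝 y₀) (𝓝 x₀) := hφy₀ ▸ hφ.tendsto
  have hfφt : Tendsto (f ∘ φ) (𝓝 y₀) (𝓝 x₀) := (hfx₀ ▸ hf.tendsto).comp hφt
  filter_upwards [hψφ, hφt.eventually hψf, hfφt.eventually hφψ] with y h1 h2 h3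
  rw [Function.comp_apply] at h3
  rw [← h3, h2, h1]

theorem exists_ball_forall_of_eventually {X : Type*} [PseudoMetricSpace X] {x : X} {p : X → Prop}
    (hp : ∀ᶠ y in 𝓝 x, p y) {r : ℝ} (hr : 0 < r) :
    ∃ δ, 0 < δ ∧ δ < r ∧ ∀ y ∈ ball x δ, p y := by
  obtain ⟨ε, hε, hball⟩ := eventually_nhds_iff_ball.1 hp
  exact ⟨min ε (r / 2), by positivity, (min_le_right _ _).trans_lt (by linarith),
    fun y hy => hball y (ball_subset_ball (min_le_left _ _) hy)⟩

theorem exists_between_norm_sq_lt {L : ℝ} (h0 : 0 < L) (h1 : L < 1) :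
    ∃ k, L < k ∧ k ^ 2 < L := by
  obtain ⟨k, hLk, hk⟩ := exists_between ((Real.lt_sqrt h0.le).2 (by nlinarith))
  exact ⟨k, hLk, (Real.lt_sqrt (h0.trans hLk).le).1 hk⟩

section Attracting

variable {f : ℂ → ℂ} {lam : ℂ} {k C r : ℝ}

theorem norm_iterate_succ_div_pow_sub_le (hlam : lam ≠ 0) (hk0 : 0 ≤ k) (hk1 : k ≤ 1)
    (hC : 0 ≤ C) (hcontr : ∀ z ∈ closedBall (0 : ℂ) r, ‖f z‖ ≤ k * ‖z‖)
    (hquad : ∀ z ∈ closedBall (0 : ℂ) r, ‖f z - lam * z‖ ≤ C * ‖z‖ ^ 2) (n : ℕ) {z : ℂ}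
    (hz : z ∈ closedBall 0 r) :
    ‖f^[n + 1] z / lam ^ (n + 1) - f^[n] z / lam ^ n‖ ≤
      C * r ^ 2 / ‖lam‖ * (k ^ 2 / ‖lam‖) ^ n := by
  set w := f^[n] z
  have hzr : ‖z‖ ≤ r := mem_closedBall_zero_iff.1 hz
  have hkn : k ^ n ≤ 1 := pow_le_one₀ hk0 hk1
  have hw : ‖w‖ ≤ k ^ n * r :=
    (norm_iterate_le_pow_mul hk0 hk1 hcontr n hz).trans (by gcongr)
  have hwr : w ∈ closedBall 0 r :=
    mem_closedBall_zero_iff.2 (hw.trans (mul_le_of_le_one_left ((norm_nonneg z).trans hzr) hkn))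
  have hL : 0 < ‖lam‖ := norm_pos_iff.2 hlam
  have heq : f^[n + 1] z / lam ^ (n + 1) - w / lam ^ n = (f w - lam * w) / lam ^ (n + 1) := by
    rw [Function.iterate_succ_apply']
    field_simp
    ring
  rw [heq, norm_div, norm_pow, div_le_iff₀ (by positivity)]
  calc ‖f w - lam * w‖ ≤ C * ‖w‖ ^ 2 := hquad w hwr
    _ ≤ C * (k ^ n * r) ^ 2 := by gcongr
    _ = C * r ^ 2 / ‖lam‖ * (k ^ 2 / ‖lam‖) ^ n * ‖lam‖ ^ (n + 1) := by
      rw [div_pow, pow_succ]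
      field_simp
      ring

theorem exists_linearizer_on_ball (hr : 0 < r) (hlam : lam ≠ 0) (hk0 : 0 ≤ k) (hk1 : k ≤ 1)
    (hk : k ^ 2 < ‖lam‖) (hC : 0 ≤ C) (hf' : HasDerivAt f lam 0)
    (hdiff : DifferentiableOn ℂ f (ball 0 r))
    (hcontr : ∀ z ∈ closedBall (0 : ℂ) r, ‖f z‖ ≤ k * ‖z‖)
    (hquad : ∀ z ∈ closedBall (0 : ℂ) r, ‖f z - lam * z‖ ≤ C * ‖z‖ ^ 2) :
    ∃ ψ : ℂ → ℂ, DifferentiableOn ℂ ψ (ball 0 r) ∧ ψ 0 = 0 ∧ deriv ψ 0 = 1 ∧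
      ∀ z ∈ ball (0 : ℂ) r, ψ (f z) = lam * ψ z := by
  have hf0 : f 0 = 0 := norm_le_zero_iff.1 (by simpa using hcontr 0 (mem_closedBall_self hr.le))
  set F : ℕ → ℂ → ℂ := fun n z => f^[n] z / lam ^ n
  have hsum : Summable fun n : ℕ => C * r ^ 2 / ‖lam‖ * (k ^ 2 / ‖lam‖) ^ n :=
    (summable_geometric_of_lt_one (by positivity)
      ((div_lt_one (norm_pos_iff.2 hlam)).2 hk)).mul_left _
  obtain ⟨ψ, hψ⟩ := exists_tendstoUniformlyOn_of_norm_sub_succ_le (F := F) hsum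
    fun n z hz => norm_iterate_succ_div_pow_sub_le hlam hk0 hk1 hC hcontr hquad n hz
  have hmaps : MapsTo f (ball 0 r) (ball 0 r) := fun z hz => by
    rw [mem_ball_zero_iff] at hz ⊢
    exact (hcontr z (ball_subset_closedBall (mem_ball_zero_iff.2 hz))).trans_lt
      (lt_of_le_of_lt (mul_le_of_le_one_left (norm_nonneg z) hk1) hz)
  have hFdiff : ∀ᶠ n in atTop, DifferentiableOn ℂ (F n) (ball 0 r) :=
    Eventually.of_forall fun n => (hdiff.iterate hmaps n).div_const _
  have hloc : TendstoLocallyUniformlyOn F ψ atTop (ball 0 r) :=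
    hψ.tendstoLocallyUniformlyOn.mono ball_subset_closedBall
  have hlim : ∀ z ∈ ball (0 : ℂ) r, Tendsto (fun n => F n z) atTop (𝓝 (ψ z)) :=
    fun z hz => hloc.tendsto_at hz
  have h0 : (0 : ℂ) ∈ ball 0 r := mem_ball_self hr
  refine ⟨ψ, hloc.differentiableOn hFdiff isOpen_ball, ?_, ?_, fun z hz => ?_⟩
  · refine tendsto_nhds_unique (hlim 0 h0) ?_
    simp [F, Function.iterate_fixed hf0]
  · have hF' : ∀ n, deriv (F n) 0 = 1 := fun n =>
      ((HasDerivAt.iterate _ hf' hf0 n).div_const (lam ^ n)).deriv.trans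
        (div_self (pow_ne_zero n hlam))
    refine tendsto_nhds_unique ((hloc.deriv hFdiff isOpen_ball).tendsto_at h0) ?_
    simp [hF']
  · have hlim_succ := ((hlim z hz).comp (tendsto_add_atTop_nat 1)).const_mul lam
    refine tendsto_nhds_unique (hlim (f z) (hmaps hz)) (hlim_succ.congr fun n => ?_)
    simp only [F, Function.comp_apply, Function.iterate_succ_apply, pow_succ]
    field_simp

end Attracting

structure IsLinearizer (f : ℂ → ℂ) (lam : ℂ) (ψ : ℂ → ℂ) : Prop where
  analyticAt : AnalyticAt ℂ ψ 0
  map_zero : ψ 0 = 0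
  deriv_eq_one : deriv ψ 0 = 1
  eventually_comp_eq : ∀ᶠ z in 𝓝 0, ψ (f z) = lam * ψ z

theorem exists_isLinearizer_of_norm_lt_one {f : ℂ → ℂ} {lam : ℂ} (hf : AnalyticAt ℂ f 0)
    (hf0 : f 0 = 0) (hf' : deriv f 0 = lam) (hlam0 : lam ≠ 0) (hlam1 : ‖lam‖ < 1) :
    ∃ ψ, IsLinearizer f lam ψ := by
  obtain ⟨k, hLk, hk⟩ := exists_between_norm_sq_lt (norm_pos_iff.2 hlam0) hlam1
  have hder : HasDerivAt f lam 0 := hf' ▸ hf.differentiableAt.hasDerivAt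
  obtain ⟨C, hC, hCbound⟩ := (hf' ▸ hf.isBigO_sub_deriv_mul_sq hf0).exists_nonneg
  have hquad : ∀ᶠ z in 𝓝 0, ‖f z - lam * z‖ ≤ C * ‖z‖ ^ 2 :=
    hCbound.bound.mono fun z hz => by simpa using hz
  obtain ⟨r, hr, hball⟩ := nhds_basis_closedBall.eventually_iff.1
    ((hquad.and (hder.eventually_norm_le hf0 hLk)).and hf.eventually_analyticAt)
  obtain ⟨ψ, hψdiff, hψ0, hψ', hψf⟩ := exists_linearizer_on_ball hr hlam0
    (by linarith [norm_nonneg lam]) (by nlinarith) hk hC hder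
    (fun z hz => (hball (ball_subset_closedBall hz)).2.differentiableAt.differentiableWithinAt)
    (fun z hz => (hball hz).1.2) (fun z hz => (hball hz).1.1)
  exact ⟨ψ, hψdiff.analyticAt (ball_mem_nhds 0 hr), hψ0, hψ',
    eventually_of_mem (ball_mem_nhds 0 hr) hψf⟩

theorem exists_isLinearizer_of_one_lt_norm {f : ℂ → ℂ} {lam : ℂ} (hf : AnalyticAt ℂ f 0)
    (hf0 : f 0 = 0) (hf' : deriv f 0 = lam) (hlam1 : 1 < ‖lam‖) :
    ∃ ψ, IsLinearizer f lam ψ := by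
  have hlam0 : lam ≠ 0 := norm_pos_iff.1 (one_pos.trans hlam1)
  obtain ⟨g, hg, hg0, hg', hfg, hgf⟩ := hf.exists_localInverse (hf' ▸ hlam0)
  rw [hf0] at hg hg0 hg' hfg
  obtain ⟨ψ, hψ, hψ0, hψ', hψg⟩ := exists_isLinearizer_of_norm_lt_one hg hg0 (hf' ▸ hg')
    (inv_ne_zero hlam0) (by rw [norm_inv]; exact inv_lt_one_of_one_lt₀ hlam1)
  refine ⟨ψ, hψ, hψ0, hψ', ?_⟩
  have hfc : Tendsto f (𝓝 0) (𝓝 0) := by simpa [hf0] using hf.continuousAt.tendsto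
  filter_upwards [hgf, hfc.eventually hψg] with z hgfz hψgz
  rw [hgfz] at hψgz
  rw [hψgz, mul_inv_cancel_left₀ hlam0]

theorem exists_isLinearizer {f : ℂ → ℂ} {lam : ℂ} (hf : AnalyticAt ℂ f 0) (hf0 : f 0 = 0)
    (hf' : deriv f 0 = lam) (hlam0 : lam ≠ 0) (hlam1 : ‖lam‖ ≠ 1) :
    ∃ ψ, IsLinearizer f lam ψ := by
  rcases hlam1.lt_or_gt with hlt | hgt
  · exact exists_isLinearizer_of_norm_lt_one hf hf0 hf' hlam0 hlt
  · exact exists_isLinearizer_of_one_lt_norm hf hf0 hf' hgt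

theorem koenig_existence
    (f : ℂ → ℂ) (r₀ : ℝ) (hr₀ : 0 < r₀) (lam : ℂ)
    (hf : DifferentiableOn ℂ f (ball (0:ℂ) r₀))
    (hf0 : f 0 = 0) (hf' : deriv f 0 = lam)
    (hlam0 : lam ≠ 0) (hlam1 : ‖lam‖ ≠ 1) :
    ∃ δ : ℝ, ∃ φ : ℂ → ℂ, 0 < δ ∧ δ < r₀ ∧
      DifferentiableOn ℂ φ (ball (0:ℂ) δ) ∧
      Set.InjOn φ (ball (0:ℂ) δ) ∧
      φ 0 = 0 ∧ deriv φ 0 ≠ 0 ∧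
      ∀ z ∈ ball (0:ℂ) δ, f (φ z) = φ (lam * z) := by
  have hfA : AnalyticAt ℂ f 0 := hf.analyticAt (ball_mem_nhds 0 hr₀)
  obtain ⟨ψ, hψ, hψ0, hψ', hψf⟩ := exists_isLinearizer hfA hf0 hf' hlam0 hlam1
  obtain ⟨φ, hφ, hφ0, hφ', hψφ, hφψ⟩ := hψ.exists_localInverse (by simp [hψ'])
  rw [hψ0] at hφ hφ0 hφ' hψφ
  have hconj : ∀ᶠ z in 𝓝 0, f (φ z) = φ (lam * z) :=
    eventually_semiconj_of_leftInverse hfA.continuousAt hf0 hφ.continuousAt hφ0 hψf hφψ hψφ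
  obtain ⟨δ, hδ, hδr₀, hball⟩ := exists_ball_forall_of_eventually
    ((hφ.eventually_analyticAt.and hψφ).and hconj) hr₀
  refine ⟨δ, φ, hδ, hδr₀, fun z hz => (hball z hz).1.1.differentiableAt.differentiableWithinAt,
    fun z hz w hw hzw => ?_, hφ0, by simp [hφ', hψ'], fun z hz => (hball z hz).2⟩
  rw [← (hball z hz).1.2, hzw, (hball w hw).1.2]
end

section
/- Uniqueness in König's Theorem: Suppose f is holomorphic near 0 with f(0) = 0, f'(0) = λ, 0 < |λ| < 1, and φ₁, φ₂ are injective holomorphic maps on Δ_δ fixing 0 with nonvanishing derivative at 0 such that φ_i^{-1} ∘ f ∘ φ_i (z) = λz on Δ_δ for i = 1, 2. Then there is a nonzero constant c such that φ₂^{-1}(w) = c · φ₁^{-1}(w) for all w in a neighborhood of 0. -/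
/-! Write `φ₁ = φ₂ ∘ ψ` near `0`, with `ψ` the composite of `φ₁` and a local inverse of `φ₂`.
Both conjugacies give `ψ (λ z) = λ ψ z`, so the difference quotient `ψ z / z` is constant along
the orbit `λⁿ z → 0` and hence equals `ψ' 0`: `ψ` is multiplication by `ψ' 0 ≠ 0`. -/

open Metric Filter Set
open scoped Topology

section

variable {𝕜 : Type*} [NontriviallyNormedField 𝕜]

theorem mapsTo_mul_ball_zero {lam : 𝕜} (hlam : ‖lam‖ ≤ 1) (r : ℝ) :
    MapsTo (lam * ·) (ball (0 : 𝕜) r) (ball 0 r) := fun w hw => by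
  rw [mem_ball_zero_iff] at hw ⊢
  calc ‖lam * w‖ = ‖lam‖ * ‖w‖ := norm_mul _ _
    _ ≤ ‖w‖ := mul_le_of_le_one_left (norm_nonneg w) hlam
    _ < r := hw

theorem HasStrictDerivAt.exists_hasDerivAt_lift [CompleteSpace 𝕜] {φ₁ φ₂ : 𝕜 → 𝕜}
    {a₁ a₂ x y : 𝕜} (h₂ : HasStrictDerivAt φ₂ a₂ y) (ha₂ : a₂ ≠ 0)
    (h₁ : HasDerivAt φ₁ a₁ x) (hxy : φ₁ x = φ₂ y) :
    ∃ ψ : 𝕜 → 𝕜, HasDerivAt ψ (a₂⁻¹ * a₁) x ∧ ψ x = y ∧ ∀ᶠ z in 𝓝 x, φ₂ (ψ z) = φ₁ z := by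
  set g := h₂.localInverse φ₂ a₂ y ha₂
  have hg : HasDerivAt g a₂⁻¹ (φ₁ x) := hxy ▸ (h₂.to_localInverse ha₂).hasDerivAt
  refine ⟨g ∘ φ₁, hg.comp x h₁, ?_, ?_⟩
  · exact (congrArg g hxy).trans (h₂.eventually_left_inverse ha₂).self_of_nhds
  · have hright := h₂.eventually_right_inverse ha₂
    rw [← hxy] at hright
    exact h₁.continuousAt.tendsto.eventually hright

section LinearOfCommMul

variable {ψ : 𝕜 → 𝕜} {lam : 𝕜} {s : Set 𝕜}

theorem slope_zero_mul_eq_of_map_mul (hψ0 : ψ 0 = 0) (hlam0 : lam ≠ 0) {z : 𝕜}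
    (hz : ψ (lam * z) = lam * ψ z) : slope ψ 0 (lam * z) = slope ψ 0 z := by
  simp only [slope_def_field, sub_zero, hψ0, hz]
  exact mul_div_mul_left _ _ hlam0

theorem slope_zero_pow_mul_eq_of_map_mul (hψ0 : ψ 0 = 0) (hlam0 : lam ≠ 0)
    (hs : MapsTo (lam * ·) s s) (hmul : ∀ z ∈ s, ψ (lam * z) = lam * ψ z) {z : 𝕜} (hz : z ∈ s)
    (n : ℕ) : lam ^ n * z ∈ s ∧ slope ψ 0 (lam ^ n * z) = slope ψ 0 z := by
  induction n with
  | zero => simpa using hz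
  | succ n ih =>
    rw [pow_succ', mul_assoc]
    exact ⟨hs ih.1, (slope_zero_mul_eq_of_map_mul hψ0 hlam0 (hmul _ ih.1)).trans ih.2⟩

theorem eqOn_mul_of_hasDerivAt_of_map_mul {c : 𝕜} (hψ : HasDerivAt ψ c 0) (hψ0 : ψ 0 = 0)
    (hlam0 : lam ≠ 0) (hlam1 : ‖lam‖ < 1) (hs : MapsTo (lam * ·) s s)
    (hmul : ∀ z ∈ s, ψ (lam * z) = lam * ψ z) : EqOn ψ (c * ·) s := by
  intro z hz
  rcases eq_or_ne z 0 with rfl | hz0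
  · simpa using hψ0
  have horbit : Tendsto (fun n : ℕ => lam ^ n * z) atTop (𝓝[≠] 0) := by
    refine tendsto_nhdsWithin_of_tendsto_nhds_of_eventually_within _ ?_ ?_
    · simpa using (tendsto_pow_atTop_nhds_zero_of_norm_lt_one hlam1).mul_const z
    · exact Eventually.of_forall fun n => mul_ne_zero (pow_ne_zero n hlam0) hz0
  have hslope : Tendsto (fun n : ℕ => slope ψ 0 (lam ^ n * z)) atTop (𝓝 c) :=
    (hasDerivAt_iff_tendsto_slope.mp hψ).comp horbit
  simp only [fun n => (slope_zero_pow_mul_eq_of_map_mul hψ0 hlam0 hs hmul hz n).2] at hslope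
  have hc : slope ψ 0 z = c := tendsto_nhds_unique tendsto_const_nhds hslope
  rw [← hc, slope_def_field, hψ0, sub_zero, sub_zero]
  exact (div_mul_cancel₀ _ hz0).symm

end LinearOfCommMul

end

theorem koenig_uniqueness_general
    (f : ℂ → ℂ) (lam : ℂ) (δ : ℝ) (hδ : 0 < δ)
    (hlam : 0 < ‖lam‖) (hlam1 : ‖lam‖ < 1)
    (φ₁ φ₂ : ℂ → ℂ)
    (hφ₁ : DifferentiableOn ℂ φ₁ (ball (0:ℂ) δ))
    (hφ₂ : DifferentiableOn ℂ φ₂ (ball (0:ℂ) δ))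
    (hinj₂ : Set.InjOn φ₂ (ball (0:ℂ) δ))
    (h₁0 : φ₁ 0 = 0) (h₂0 : φ₂ 0 = 0)
    (h₁' : deriv φ₁ 0 ≠ 0) (h₂' : deriv φ₂ 0 ≠ 0)
    (hconj₁ : ∀ z ∈ ball (0:ℂ) δ, f (φ₁ z) = φ₁ (lam * z))
    (hconj₂ : ∀ z ∈ ball (0:ℂ) δ, f (φ₂ z) = φ₂ (lam * z)) :
    ∃ c : ℂ, c ≠ 0 ∧ ∃ ε : ℝ, 0 < ε ∧
      ∀ z ∈ ball (0:ℂ) ε, φ₁ z = φ₂ (c * z) := by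
  have hδ0 : ball (0:ℂ) δ ∈ 𝓝 0 := ball_mem_nhds 0 hδ
  obtain ⟨ψ, hψ, hψ0, hlift⟩ :=
    (hφ₂.analyticAt hδ0).hasStrictDerivAt.exists_hasDerivAt_lift h₂'
      (hφ₁.differentiableAt hδ0).hasDerivAt (h₁0.trans h₂0.symm)
  have hψδ : ∀ᶠ z in 𝓝 0, ψ z ∈ ball (0:ℂ) δ :=
    hψ.continuousAt.tendsto.eventually_mem (by rwa [hψ0])
  obtain ⟨ε, hε, hball⟩ := eventually_nhds_iff_ball.mp ((hlift.and hψδ).and hδ0)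
  have hmaps := mapsTo_mul_ball_zero hlam1.le
  have hcomm : ∀ z ∈ ball (0:ℂ) ε, ψ (lam * z) = lam * ψ z := fun z hz => by
    obtain ⟨⟨hφz, hψz⟩, hzδ⟩ := hball z hz
    obtain ⟨⟨hφlz, hψlz⟩, -⟩ := hball _ (hmaps ε hz)
    refine hinj₂ hψlz (hmaps δ hψz) ?_
    rw [hφlz, ← hconj₁ z hzδ, ← hφz, hconj₂ _ hψz]
  have hlin := eqOn_mul_of_hasDerivAt_of_map_mul hψ hψ0 (norm_pos_iff.mp hlam) hlam1
    (hmaps ε) hcomm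
  exact ⟨_, mul_ne_zero (inv_ne_zero h₂') h₁', ε, hε,
    fun z hz => by rw [← (hball z hz).1.1, hlin hz]⟩

theorem koenig_uniqueness
    (f : ℂ → ℂ) (lam : ℂ) (δ : ℝ) (hδ : 0 < δ)
    (hf : AnalyticAt ℂ f 0) (hf0 : f 0 = 0) (hf' : deriv f 0 = lam)
    (hlam : 0 < ‖lam‖) (hlam1 : ‖lam‖ < 1)
    (φ₁ φ₂ : ℂ → ℂ)
    (hφ₁ : DifferentiableOn ℂ φ₁ (ball (0:ℂ) δ))
    (hφ₂ : DifferentiableOn ℂ φ₂ (ball (0:ℂ) δ))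
    (hinj₁ : Set.InjOn φ₁ (ball (0:ℂ) δ))
    (hinj₂ : Set.InjOn φ₂ (ball (0:ℂ) δ))
    (h₁0 : φ₁ 0 = 0) (h₂0 : φ₂ 0 = 0)
    (h₁' : deriv φ₁ 0 ≠ 0) (h₂' : deriv φ₂ 0 ≠ 0)
    (hconj₁ : ∀ z ∈ ball (0:ℂ) δ, f (φ₁ z) = φ₁ (lam * z))
    (hconj₂ : ∀ z ∈ ball (0:ℂ) δ, f (φ₂ z) = φ₂ (lam * z)) :
    ∃ c : ℂ, c ≠ 0 ∧ ∃ ε : ℝ, 0 < ε ∧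
      ∀ z ∈ ball (0:ℂ) ε, φ₁ z = φ₂ (c * z) :=
  koenig_uniqueness_general f lam δ hδ hlam hlam1 φ₁ φ₂ hφ₁ hφ₂ hinj₂ h₁0 h₂0 h₁' h₂' hconj₁ hconj₂
end

section
/- If Φ(z) = Σ_{j≥1} a_j z^j is holomorphic on a disk Δ_δ with a_1 ≠ 0 and satisfies Φ(z^n) = (Φ(z))^n for all z ∈ Δ_δ, where n ≥ 2, then a_1^{n-1} = 1 and a_j = 0 for all j ≥ 2, i.e., Φ(z) = a_1 z with a_1 an (n−1)-th root of unity. -/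
/-!
Write `Φ z = z g(z)` with `g = dslope Φ 0`, so that `g 0 = Φ'(0) ≠ 0` and `g (z ^ n) = g z ^ n`
for `z ≠ 0`. Iterating, `g z ^ (n ^ k) = g (z ^ (n ^ k)) → g 0 ≠ 0` for small `z ≠ 0`, which forces
`‖g z‖ = 1`, hence `‖g‖ ≡ 1` near `0`. By the maximum modulus principle `g` is constant near `0`,
so `Φ` is linear there, and by the identity theorem on the whole disk.
-/

open Metric Complex Filter Topology Set

theorem map_pow_pow_eq_pow_pow {M N : Type*} [Monoid M] [Monoid N] {g : M → N} {S : Set M}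
    {n : ℕ} (hS : MapsTo (· ^ n) S S) (hg : ∀ z ∈ S, g (z ^ n) = g z ^ n) (k : ℕ) :
    ∀ z ∈ S, g (z ^ n ^ k) = g z ^ n ^ k := by
  induction k with
  | zero => simp
  | succ k ih =>
    intro z hz
    rw [pow_succ', pow_mul, ih _ (hS hz), hg z hz, ← pow_mul]

theorem norm_eq_one_of_tendsto_pow {𝕜 : Type*} [NormedDivisionRing 𝕜] {x a : 𝕜} {m : ℕ → ℕ}
    (hm : Tendsto m atTop atTop) (hx : Tendsto (fun k ↦ x ^ m k) atTop (𝓝 a)) (ha : a ≠ 0) :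
    ‖x‖ = 1 := by
  rcases lt_trichotomy ‖x‖ 1 with hlt | heq | hgt
  · exact absurd (tendsto_nhds_unique hx
      ((tendsto_pow_atTop_nhds_zero_of_norm_lt_one hlt).comp hm)) ha
  · exact heq
  · have : Tendsto (fun k ↦ ‖x ^ m k‖) atTop atTop :=
      ((tendsto_pow_atTop_atTop_of_one_lt hgt).comp hm).congr fun k ↦ (norm_pow x (m k)).symm
    exact absurd hx.norm (not_tendsto_nhds_of_tendsto_atTop this _)

theorem pow_mem_ball_zero {R : Type*} [SeminormedRing R] {r : ℝ} (hr : r ≤ 1) {n : ℕ}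
    (hn : n ≠ 0) {z : R} (hz : z ∈ ball 0 r) : z ^ n ∈ ball 0 r := by
  rw [mem_ball_zero_iff] at hz ⊢
  calc ‖z ^ n‖ ≤ ‖z‖ ^ n := norm_pow_le' z (Nat.pos_of_ne_zero hn)
    _ ≤ ‖z‖ := pow_le_of_le_one (norm_nonneg z) (hz.le.trans hr) hn
    _ < r := hz

theorem mul_dslope_zero {𝕜 : Type*} [NontriviallyNormedField 𝕜] {Φ : 𝕜 → 𝕜} (hΦ₀ : Φ 0 = 0)
    (z : 𝕜) : z * dslope Φ 0 z = Φ z := by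
  simpa [hΦ₀] using sub_smul_dslope Φ 0 z

theorem dslope_zero_pow_eq_pow {𝕜 : Type*} [NontriviallyNormedField 𝕜] {Φ : 𝕜 → 𝕜} {n : ℕ}
    (hΦ₀ : Φ 0 = 0) {z : 𝕜} (hz : z ≠ 0) (h : Φ (z ^ n) = Φ z ^ n) :
    dslope Φ 0 (z ^ n) = dslope Φ 0 z ^ n := by
  rw [← mul_dslope_zero hΦ₀, ← mul_dslope_zero hΦ₀ z, mul_pow] at h
  exact mul_left_cancel₀ (pow_ne_zero n hz) h

theorem Complex.eqOn_ball_of_map_pow_eq_pow {g : ℂ → ℂ} {r : ℝ} {n : ℕ} (hn : 1 < n)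
    (hr : 0 < r) (hr₁ : r ≤ 1) (hg : DifferentiableOn ℂ g (ball 0 r)) (hg₀ : g 0 ≠ 0)
    (hcomm : ∀ z ∈ ball (0 : ℂ) r \ {0}, g (z ^ n) = g z ^ n) :
    EqOn g (Function.const ℂ (g 0)) (ball 0 r) := by
  have hmaps : MapsTo (· ^ n) (ball (0 : ℂ) r \ {0}) (ball 0 r \ {0}) := fun z hz ↦
    ⟨pow_mem_ball_zero hr₁ (by omega) hz.1, pow_ne_zero n hz.2⟩
  have hcont : ContinuousAt g 0 := hg.continuousOn.continuousAt (ball_mem_nhds 0 hr)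
  have hnorm : ∀ z ∈ ball (0 : ℂ) r \ {0}, ‖g z‖ = 1 := by
    intro z hz
    have hpow : Tendsto (fun k ↦ n ^ k) atTop atTop := tendsto_pow_atTop_atTop_of_one_lt hn
    have hzero : Tendsto (fun k ↦ z ^ n ^ k) atTop (𝓝 0) :=
      (tendsto_pow_atTop_nhds_zero_of_norm_lt_one
        ((mem_ball_zero_iff.1 hz.1).trans_le hr₁)).comp hpow
    refine norm_eq_one_of_tendsto_pow hpow ?_ hg₀
    exact (hcont.tendsto.comp hzero).congr fun k ↦ map_pow_pow_eq_pow_pow hmaps hcomm k z hz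
  have hnorm₀ : ‖g 0‖ = 1 := by
    have : (‖g ·‖) =ᶠ[𝓝[≠] 0] fun _ ↦ (1 : ℝ) :=
      eventually_nhdsWithin_iff.2 <|
        eventually_of_mem (ball_mem_nhds 0 hr) fun z hzr hz0 ↦ hnorm z ⟨hzr, hz0⟩
    exact ((hcont.norm.eventuallyEq_nhds_iff_eventuallyEq_nhdsNE continuousAt_const).1
      this).eq_of_nhds
  refine eqOn_of_isPreconnected_of_isMaxOn_norm (convex_ball _ _).isPreconnected isOpen_ball hg
    (mem_ball_self hr) fun z hz ↦ ?_
  show ‖g z‖ ≤ ‖g 0‖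
  rcases eq_or_ne z 0 with rfl | hz0
  · exact le_rfl
  · rw [hnorm z ⟨hz, hz0⟩, hnorm₀]

theorem commuting_with_power_is_linear
    (Φ : ℂ → ℂ) (δ : ℝ) (hδ : 0 < δ) (n : ℕ) (hn : 2 ≤ n)
    (hΦ : DifferentiableOn ℂ Φ (ball (0:ℂ) δ))
    (hΦ0 : Φ 0 = 0)
    (ha₁ : deriv Φ 0 ≠ 0)
    (hcomm : ∀ z ∈ ball (0:ℂ) δ, Φ (z ^ n) = (Φ z) ^ n) :
    (deriv Φ 0) ^ (n - 1) = 1 ∧ ∀ z ∈ ball (0:ℂ) δ, Φ z = deriv Φ 0 * z := by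
  set a := deriv Φ 0
  -- `r ≤ 1` makes the punctured ball of radius `r` invariant under `z ↦ z ^ n`.
  set r := min δ 1
  have hr : 0 < r := lt_min hδ one_pos
  have hr₁ : r ≤ 1 := min_le_right _ _
  have hrδ : ball (0 : ℂ) r ⊆ ball 0 δ := ball_subset_ball (min_le_left _ _)
  have hg₀ : dslope Φ 0 0 = a := dslope_same Φ 0
  have hgcomm : ∀ z ∈ ball (0 : ℂ) r \ {0}, dslope Φ 0 (z ^ n) = dslope Φ 0 z ^ n :=
    fun z hz ↦ dslope_zero_pow_eq_pow hΦ0 hz.2 (hcomm z (hrδ hz.1))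
  have hg : DifferentiableOn ℂ (dslope Φ 0) (ball 0 r) :=
    ((differentiableOn_dslope (ball_mem_nhds 0 hδ)).2 hΦ).mono hrδ
  have hconst := Complex.eqOn_ball_of_map_pow_eq_pow hn hr hr₁ hg (hg₀ ▸ ha₁) hgcomm
  have hlin : ∀ z ∈ ball (0 : ℂ) r, Φ z = a * z := fun z hz ↦ by
    rw [← mul_dslope_zero hΦ0, hconst hz, Function.const_apply, hg₀, mul_comm]
  obtain ⟨z, hz0, hzr⟩ := NormedField.exists_norm_lt ℂ hr
  have hz : z ∈ ball (0 : ℂ) r := mem_ball_zero_iff.2 hzr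
  have han : a ^ n = a := by
    have := hgcomm z ⟨hz, norm_pos_iff.1 hz0⟩
    rwa [hconst hz, hconst (pow_mem_ball_zero hr₁ (by omega) hz),
      Function.const_apply, hg₀, eq_comm] at this
  refine ⟨mul_left_cancel₀ ha₁ ?_, fun z hz ↦ ?_⟩
  · rw [← pow_succ', Nat.sub_add_cancel (by omega), han, mul_one]
  · exact (hΦ.analyticOnNhd isOpen_ball).eqOn_of_preconnected_of_eventuallyEq
      ((differentiable_id.const_mul a).differentiableOn.analyticOnNhd isOpen_ball)
      (convex_ball _ _).isPreconnected (mem_ball_self hδ)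
      (eventually_of_mem (ball_mem_nhds 0 hr) hlin) hz
end

section
/- Let f(z) = λz(1 + O(z)) be holomorphic near 0 with 0 < |λ| < 1, f injective on the closed disk of radius δ, |f(z)| < |z| on this closed disk minus the origin, and let 0 < r ≤ δ. Define h(c, z) : Δ × E → ℂ on E = S_r ∪ T_r, where S_r = {|z| = r} and T_r = {|z| = |λ|r}, by h(c, z) = z for z ∈ S_r and h(c, z) = (r/(cδ)) f(cδz/(rλ)) for z ∈ T_r, c ≠ 0 (extended by z at c = 0). Then h is a holomorphic motion of E parametrized by the unit disk Δ: h(0, z) = z, h(·, z) is holomorphic in c for each z ∈ E, and h(c, ·) is injective on E for each c ∈ Δ. -/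
open Metric Complex

/-- A holomorphic motion of a set `E ⊆ ℂ` parametrized by the disk of radius `r`. -/
def IsHolomorphicMotion (r : ℝ) (E : Set ℂ) (h : ℂ → ℂ → ℂ) : Prop :=
  (∀ z ∈ E, h 0 z = z) ∧
  (∀ c ∈ ball (0:ℂ) r, Set.InjOn (h c) E) ∧
  (∀ z ∈ E, DifferentiableOn ℂ (fun c => h c z) (ball (0:ℂ) r))

/-!
For `c ≠ 0`, `h c` is the identity on `S_r` and, on `T_r`, a rescaling of `f` by the factor
`cδ / (rλ)`. It is injective on `T_r` because `f` is, and it maps `T_r` strictly inside the disk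
of radius `r` because `‖f w‖ < ‖w‖`, so `h c` cannot identify a point of `S_r` with one of `T_r`.
For fixed `z ∈ T_r` and `w = δz / (rλ)`, the map `c ↦ h c z` is `(r/δ) · dslope (c ↦ f (c w)) 0`,
which is holomorphic by the removable singularity theorem and equals `(r/δ) f'(0) w = z` at `0`.
-/

theorem Set.InjOn.union_of_eqOn_id_of_norm_lt {E : Type*} [SeminormedAddCommGroup E]
    {g : E → E} {r : ℝ} {T : Set E} (hS : Set.EqOn g id (sphere 0 r)) (hT : Set.InjOn g T)
    (hlt : ∀ z ∈ T, ‖g z‖ < r) : Set.InjOn g (sphere 0 r ∪ T) := by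
  have hne : ∀ x ∈ sphere (0 : E) r, ∀ y ∈ T, g x ≠ g y := fun x hx y hy hxy =>
    (hlt y hy).ne' (by rw [← hxy, hS hx, id, ← mem_sphere_zero_iff_norm.mp hx])
  rintro x (hx | hx) y (hy | hy) hxy
  · simpa [hS hx, hS hy] using hxy
  · exact absurd hxy (hne x hx y hy)
  · exact absurd hxy.symm (hne y hy x hx)
  · exact hT hx hy hxy

theorem differentiableOn_dslope_comp_mul {f : ℂ → ℂ} {ρ : ℝ} {w : ℂ} (hρ : 0 < ρ)
    (hf : DifferentiableOn ℂ f (ball 0 ρ)) (hw : ‖w‖ ≤ ρ) :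
    DifferentiableOn ℂ (dslope (fun c => f (c * w)) 0) (ball 0 1) := by
  refine (Complex.differentiableOn_dslope (ball_mem_nhds _ one_pos)).mpr ?_
  refine hf.comp (differentiable_id.mul_const w).differentiableOn fun c hc => ?_
  rw [mem_ball_zero_iff] at hc ⊢
  rw [norm_mul]
  rcases (norm_nonneg w).eq_or_lt with hw0 | hw0
  · rw [← hw0, mul_zero]; exact hρ
  · calc ‖c‖ * ‖w‖ < 1 * ‖w‖ := by gcongr
      _ ≤ ρ := by rwa [one_mul]

theorem dslope_comp_mul_zero {f : ℂ → ℂ} (w : ℂ) (hf : DifferentiableAt ℂ f 0) :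
    dslope (fun c => f (c * w)) 0 0 = deriv f 0 * w := by
  have hf' : HasDerivAt f (deriv f 0) (0 * w) := by simpa using hf.hasDerivAt
  rw [dslope_same]
  exact (hf'.comp 0 (hasDerivAt_mul_const w)).deriv


section Rescaling

variable {f : ℂ → ℂ} {lam c z : ℂ} {δ r : ℝ}

theorem norm_ofReal_mul_div_eq (hr : 0 < r) (hδ : 0 ≤ δ) (hlam : lam ≠ 0)
    (hz : ‖z‖ = ‖lam‖ * r) : ‖(δ : ℂ) * z / (r * lam)‖ = δ := by
  have : ‖lam‖ * r ≠ 0 := by positivity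
  rw [norm_div, norm_mul, norm_mul, hz, norm_real, norm_real, Real.norm_of_nonneg hδ,
    Real.norm_of_nonneg hr.le, mul_comm r, mul_div_assoc, div_self this, mul_one]

theorem mul_ofReal_mul_div_eq (c : ℂ) :
    c * δ * z / (r * lam) = c * ((δ : ℂ) * z / (r * lam)) := by
  rw [mul_assoc, mul_div_assoc]

theorem norm_mul_ofReal_mul_div_eq (hr : 0 < r) (hδ : 0 ≤ δ) (hlam : lam ≠ 0)
    (hz : ‖z‖ = ‖lam‖ * r) : ‖c * δ * z / (r * lam)‖ = ‖c‖ * δ := by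
  rw [mul_ofReal_mul_div_eq, norm_mul, norm_ofReal_mul_div_eq hr hδ hlam hz]

theorem mul_ofReal_mul_div_mem_closedBall (hr : 0 < r) (hδ : 0 ≤ δ) (hlam : lam ≠ 0)
    (hc : ‖c‖ ≤ 1) (hz : ‖z‖ = ‖lam‖ * r) : c * δ * z / (r * lam) ∈ closedBall 0 δ := by
  rw [mem_closedBall_zero_iff, norm_mul_ofReal_mul_div_eq hr hδ hlam hz]
  exact mul_le_of_le_one_left hδ hc

theorem norm_rescale_lt (hcontr : ∀ z ∈ closedBall (0:ℂ) δ, z ≠ 0 → ‖f z‖ < ‖z‖)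
    (hr : 0 < r) (hδ : 0 < δ) (hlam : lam ≠ 0) (hc0 : c ≠ 0) (hc : ‖c‖ ≤ 1)
    (hz : ‖z‖ = ‖lam‖ * r) : ‖(r / (c * δ)) * f (c * δ * z / (r * lam))‖ < r := by
  have hnorm := norm_mul_ofReal_mul_div_eq (c := c) hr hδ.le hlam hz
  have hcδ : 0 < ‖c‖ * δ := by positivity
  have hlt : ‖f (c * δ * z / (r * lam))‖ < ‖c‖ * δ := by
    rw [← hnorm]
    refine hcontr _ (mul_ofReal_mul_div_mem_closedBall hr hδ.le hlam hc hz) ?_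
    rw [← norm_ne_zero_iff, hnorm]
    exact hcδ.ne'
  calc ‖(r / (c * δ)) * f (c * δ * z / (r * lam))‖
      = r / (‖c‖ * δ) * ‖f (c * δ * z / (r * lam))‖ := by
        rw [norm_mul, norm_div, norm_mul, norm_real, norm_real, Real.norm_of_nonneg hδ.le,
          Real.norm_of_nonneg hr.le]
    _ < r / (‖c‖ * δ) * (‖c‖ * δ) := by gcongr
    _ = r := div_mul_cancel₀ r hcδ.ne'

theorem injOn_rescale (hinj : Set.InjOn f (closedBall (0:ℂ) δ)) (hr : 0 < r) (hδ : 0 < δ)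
    (hlam : lam ≠ 0) (hc0 : c ≠ 0) (hc : ‖c‖ ≤ 1) :
    Set.InjOn (fun z => (r / (c * δ)) * f (c * δ * z / (r * lam))) (sphere 0 (‖lam‖ * r)) := by
  intro z₁ hz₁ z₂ hz₂ he
  rw [mem_sphere_zero_iff_norm] at hz₁ hz₂
  have hscale : (r : ℂ) / (c * δ) ≠ 0 := by simp [hr.ne', hδ.ne', hc0]
  have := hinj (mul_ofReal_mul_div_mem_closedBall hr hδ.le hlam hc hz₁)
    (mul_ofReal_mul_div_mem_closedBall hr hδ.le hlam hc hz₂) (mul_left_cancel₀ hscale he)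
  simpa [hr.ne', hδ.ne', hc0, hlam] using this

theorem differentiableOn_of_eq_rescale (hf : DifferentiableOn ℂ f (closedBall (0:ℂ) δ))
    (hf0 : f 0 = 0) (hf' : deriv f 0 = lam) (hr : 0 < r) (hδ : 0 < δ) (hlam : lam ≠ 0)
    (hz : ‖z‖ = ‖lam‖ * r) {g : ℂ → ℂ} (hg0 : g 0 = z)
    (hg : ∀ c ∈ ball (0:ℂ) 1, c ≠ 0 → g c = (r / (c * δ)) * f (c * δ * z / (r * lam))) :
    DifferentiableOn ℂ g (ball 0 1) := by
  have hr' : (r : ℂ) ≠ 0 := ofReal_ne_zero.mpr hr.ne'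
  have hδ' : (δ : ℂ) ≠ 0 := ofReal_ne_zero.mpr hδ.ne'
  have hD := (differentiableOn_dslope_comp_mul hδ (hf.mono ball_subset_closedBall)
    (norm_ofReal_mul_div_eq hr hδ.le hlam hz).le).const_mul ((r : ℂ) / δ)
  refine hD.congr fun c hc => ?_
  rcases eq_or_ne c 0 with rfl | hc0
  · rw [hg0, dslope_comp_mul_zero _ (hf.differentiableAt (closedBall_mem_nhds 0 hδ)), hf']
    field_simp
  · rw [hg c hc hc0, dslope_of_ne _ hc0, slope_def_field, mul_ofReal_mul_div_eq]
    simp only [zero_mul, hf0, sub_zero]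
    field_simp

end Rescaling

theorem koenig_motion_general
    (f : ℂ → ℂ) (lam : ℂ) (δ r : ℝ)
    (hδ : 0 < δ) (hr : 0 < r)
    (hf : DifferentiableOn ℂ f (closedBall (0:ℂ) δ))
    (hf0 : f 0 = 0) (hf' : deriv f 0 = lam)
    (hlam : 0 < ‖lam‖)
    (hinj : Set.InjOn f (closedBall (0:ℂ) δ))
    (hcontr : ∀ z ∈ closedBall (0:ℂ) δ, z ≠ 0 → ‖f z‖ < ‖z‖)
    (h : ℂ → ℂ → ℂ)
    (hS : ∀ c ∈ ball (0:ℂ) 1, ∀ z ∈ sphere (0:ℂ) r, h c z = z)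
    (hT : ∀ c ∈ ball (0:ℂ) 1, c ≠ 0 → ∀ z ∈ sphere (0:ℂ) (‖lam‖ * r),
      h c z = ((r : ℂ) / (c * (δ : ℂ))) * f (c * (δ : ℂ) * z / ((r : ℂ) * lam)))
    (hT0 : ∀ z ∈ sphere (0:ℂ) (‖lam‖ * r), h 0 z = z) :
    IsHolomorphicMotion 1 (sphere (0:ℂ) r ∪ sphere (0:ℂ) (‖lam‖ * r)) h := by
  have hlam0 : lam ≠ 0 := norm_pos_iff.mp hlam
  have hid : ∀ z ∈ sphere (0:ℂ) r ∪ sphere (0:ℂ) (‖lam‖ * r), h 0 z = z := by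
    rintro z (hz | hz)
    exacts [hS 0 (mem_ball_self one_pos) z hz, hT0 z hz]
  refine ⟨hid, fun c hc => ?_, ?_⟩
  · rcases eq_or_ne c 0 with rfl | hc0
    · exact Set.injOn_id _ |>.congr fun z hz => (hid z hz).symm
    have hc1 : ‖c‖ ≤ 1 := (mem_ball_zero_iff.mp hc).le
    refine Set.InjOn.union_of_eqOn_id_of_norm_lt (hS c hc) ?_ fun z hz => ?_
    · exact (injOn_rescale hinj hr hδ hlam0 hc0 hc1).congr fun z hz => (hT c hc hc0 z hz).symm
    · rw [hT c hc hc0 z hz]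
      exact norm_rescale_lt hcontr hr hδ hlam0 hc0 hc1 (mem_sphere_zero_iff_norm.mp hz)
  · rintro z (hz | hz)
    · exact (differentiableOn_const z).congr fun c hc => hS c hc z hz
    · exact differentiableOn_of_eq_rescale hf hf0 hf' hr hδ hlam0
        (mem_sphere_zero_iff_norm.mp hz) (hT0 z hz) fun c hc hc0 => hT c hc hc0 z hz

theorem koenig_motion
    (f : ℂ → ℂ) (lam : ℂ) (δ r : ℝ)
    (hδ : 0 < δ) (hr : 0 < r) (hrδ : r ≤ δ)
    (hf : DifferentiableOn ℂ f (closedBall (0:ℂ) δ))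
    (hf0 : f 0 = 0) (hf' : deriv f 0 = lam)
    (hlam : 0 < ‖lam‖) (hlam1 : ‖lam‖ < 1)
    (hinj : Set.InjOn f (closedBall (0:ℂ) δ))
    (hcontr : ∀ z ∈ closedBall (0:ℂ) δ, z ≠ 0 → ‖f z‖ < ‖z‖)
    (h : ℂ → ℂ → ℂ)
    (hS : ∀ c ∈ ball (0:ℂ) 1, ∀ z ∈ sphere (0:ℂ) r, h c z = z)
    (hT : ∀ c ∈ ball (0:ℂ) 1, c ≠ 0 → ∀ z ∈ sphere (0:ℂ) (‖lam‖ * r),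
      h c z = ((r : ℂ) / (c * (δ : ℂ))) * f (c * (δ : ℂ) * z / ((r : ℂ) * lam)))
    (hT0 : ∀ z ∈ sphere (0:ℂ) (‖lam‖ * r), h 0 z = z) :
    IsHolomorphicMotion 1 (sphere (0:ℂ) r ∪ sphere (0:ℂ) (‖lam‖ * r)) h :=
  koenig_motion_general f lam δ r hδ hr hf hf0 hf' hlam hinj hcontr h hS hT hT0
end
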